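/- Let b_2, b_3, …, b_M ∈ ℂ. In the ring ℂ[[x,y]] of formal power series in two variables, consider L(x,y) := log(1 − ∑_{j=2}^M b_j · x y · h_{j−2}(x,y)), where h_d(x,y) = ∑_{a+b=d} x^a y^b and log(1−u) := −∑_{l≥1} u^l/l. Then for all integers n, k ≥ 1, the coefficient of x^k y^n in L(x,y) equals −∑_{m} ((|m|−1)!/∏_{j≥2} m_j!) · b^m · V_{k−|m|}(m), where the sum is over finitely supported sequences m = (m_2, m_3, …) of nonnegative integers (with m_1 = 0) satisfying ∑_{j≥2} j·m_j = n+k, b^m = ∏_{j≥2} b_j^{m_j}, and V_p(m) denotes the coefficient of t^p in ∏_{j≥3} (1 + t + ⋯ + t^{j−2})^{m_j}. (Consequently, for g(z) = z + b_1 + b_2 z^{−1} + b_3 z^{−2} + …, whose Grunsky coefficients β_{nk} are defined by ∑_{n,k≥1} β_{nk} z^{−k} ζ^{−n} = ζ ∂_ζ log((g(ζ)−g(z))/(ζ−z)) and satisfy β_{nk} = −n·[x^k y^n]L with x = z^{−1}, y = ζ^{−1}, one gets β_{nk} = n ∑_{m: ‖m‖=n+k, m_1=0} ((|m|−1)!/∏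 m_j!) b^m V_{k−|m|}(m).) -/

import Mathlib

open PowerSeries Finset

/-- `V_p(m)` for `p ∈ ℤ`: the coefficient of `t^p` in
`∏_{j≥3} (1 + t + ⋯ + t^{j−2})^{mⱼ}` (zero when `p < 0`). -/
noncomputable def Vcoeff (m : ℕ →₀ ℕ) (p : ℤ) : ℂ :=
  if 0 ≤ p then
    PowerSeries.coeff p.toNat
      (∏ j ∈ m.support, (∑ i ∈ Finset.range (j - 1), (PowerSeries.X : PowerSeries ℂ) ^ i) ^ m j)
  else 0

/-- The series `L(x,y) := log(1 − ∑_{j=2}^M bⱼ·xy·h_{j−2}(x,y)) = −∑_{l≥1} uˡ/l` in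
`ℂ⟦x,y⟧`, where `h_d(x,y) = ∑_{a+b=d} x^a y^b` and
`u = ∑_{j=2}^M bⱼ·xy·h_{j−2}(x,y)` has zero constant term (so only `l ≤` total
degree contribute to each coefficient). -/
noncomputable def Lseries (M : ℕ) (b : ℕ → ℂ) : MvPowerSeries (Fin 2) ℂ :=
  fun d =>
    -∑ l ∈ Finset.range ((d 0 + d 1) + 1),
      (l : ℂ)⁻¹ *
        MvPowerSeries.coeff d
          ((∑ j ∈ Finset.Icc 2 M,
              (MvPowerSeries.C (b j) : MvPowerSeries (Fin 2) ℂ) * MvPowerSeries.X 0 * MvPowerSeries.X 1 *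
                ∑ ab ∈ Finset.HasAntidiagonal.antidiagonal (j - 2),
                  MvPowerSeries.X (0 : Fin 2) ^ ab.1 * MvPowerSeries.X 1 ^ ab.2) ^ l)

/-! The substitution `x ↦ t s`, `y ↦ s` sends `x^a y^c` to `t^a s^(a+c)`, so `[x^k yⁿ]` becomes
`[t^k s^(n+k)]`, and it turns `u = ∑ⱼ bⱼ·xy·h_{j−2}(x,y)` into `∑ⱼ bⱼ t (1 + ⋯ + t^{j−2}) s^j`.
By the multinomial theorem the `s^(n+k)`-coefficient of `u^l` is the sum, over `m` with `|m| = l`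
and `‖m‖ = n + k`, of `l!/∏ mⱼ!` times `∏ⱼ (bⱼ t (1 + ⋯ + t^{j−2}))^{mⱼ} = b^m t^{|m|} ∏ⱼ (⋯)^{mⱼ}`,
whose `t^k`-coefficient is `b^m V_{k−|m|}(m)`; finally `l⁻¹ · l!/∏ mⱼ! = (l−1)!/∏ mⱼ!`. -/

theorem Finset.sum_pow_eq_sum_finsuppAntidiag {ι R : Type*} [DecidableEq ι] [CommSemiring R]
    (s : Finset ι) (f : ι → R) (l : ℕ) :
    (∑ i ∈ s, f i) ^ l = ∑ m ∈ finsuppAntidiag s l, m.multinomial * m.prod fun i e => f i ^ e := by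
  rw [sum_pow_eq_sum_piAntidiag]
  symm
  refine sum_bij (fun m _ => ⇑m) (fun m hm => ?_) (fun _ _ _ _ h => DFunLike.coe_injective h)
    (fun g hg => ?_) (fun m hm => ?_)
  · obtain ⟨hsum, hsupp⟩ := mem_finsuppAntidiag.1 hm
    exact mem_piAntidiag.2 ⟨hsum, fun i hi => hsupp (Finsupp.mem_support_iff.2 hi)⟩
  · obtain ⟨hsum, hsupp⟩ := mem_piAntidiag.1 hg
    exact ⟨Finsupp.onFinset s g hsupp,
      mem_finsuppAntidiag.2 ⟨hsum, Finsupp.support_onFinset_subset⟩, rfl⟩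
  · have hsupp := (mem_finsuppAntidiag.1 hm).2
    rw [Finsupp.multinomial_eq_of_support_subset hsupp,
      Finsupp.prod_of_support_subset _ hsupp _ (by simp)]

theorem Polynomial.coeff_sum_C_mul_X_pow_pow {A : Type*} [CommSemiring A] (s : Finset ℕ)
    (a : ℕ → A) (l N : ℕ) :
    ((∑ j ∈ s, C (a j) * X ^ j) ^ l).coeff N =
      ∑ m ∈ finsuppAntidiag s l with (m.sum fun j e => j * e) = N,
        m.multinomial * m.prod fun j e => a j ^ e := by
  have hmonomial (m : ℕ →₀ ℕ) : (m.prod fun j e => (C (a j) * X ^ j) ^ e) =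
      C (m.prod fun j e => a j ^ e) * X ^ (m.sum fun j e => j * e) := by
    simp only [Finsupp.prod, Finsupp.sum, mul_pow, ← pow_mul, prod_mul_distrib, map_prod, map_pow,
      prod_pow_eq_pow_sum]
  rw [sum_pow_eq_sum_finsuppAntidiag, finsetSum_coeff, sum_filter]
  refine sum_congr rfl fun m _ => ?_
  rw [hmonomial, coeff_natCast_mul, coeff_C_mul_X_pow]
  simp only [mul_ite, mul_zero, eq_comm]

theorem Finsupp.eq_single_add_single_iff {M : Type*} [AddZeroClass M] (d : Fin 2 →₀ M) (a c : M) :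
    d = single 0 a + single 1 c ↔ d 0 = a ∧ d 1 = c := by
  constructor
  · rintro rfl
    simp
  · rintro ⟨h0, h1⟩
    ext i
    fin_cases i <;> simp [h0, h1]

/-- The substitution `x ↦ t s`, `y ↦ s` into `R⟦t⟧[s]`. -/
noncomputable def bigrade (R : Type*) [CommSemiring R] :
    MvPolynomial (Fin 2) R →ₐ[R] Polynomial R⟦X⟧ :=
  MvPolynomial.aeval ![Polynomial.C PowerSeries.X * Polynomial.X, Polynomial.X]

theorem bigrade_monomial {R : Type*} [CommSemiring R] (d : Fin 2 →₀ ℕ) (r : R) :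
    bigrade R (MvPolynomial.monomial d r) =
      Polynomial.C (C r * X ^ d 0) * Polynomial.X ^ (d 0 + d 1) := by
  simp only [bigrade, MvPolynomial.aeval_monomial, Finsupp.prod_fintype _ _ (fun _ => pow_zero _),
    Fin.prod_univ_two, Matrix.cons_val_zero, Matrix.cons_val_one, Matrix.cons_val_fin_one,
    Polynomial.algebraMap_apply, algebraMap_eq, pow_add, mul_pow, map_mul, map_pow]
  ring

theorem coeff_bigrade {R : Type*} [CommSemiring R] (F : MvPolynomial (Fin 2) R) (a c : ℕ) :
    coeff a ((bigrade R F).coeff (a + c)) =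
      MvPolynomial.coeff (Finsupp.single 0 a + Finsupp.single 1 c) F := by
  induction F using MvPolynomial.induction_on' with
  | monomial d r =>
    simp only [bigrade_monomial, Polynomial.coeff_C_mul_X_pow, MvPolynomial.coeff_monomial,
      Finsupp.eq_single_add_single_iff]
    split_ifs <;> simp [coeff_X_pow] <;> omega
  | add p q hp hq => simp only [map_add, Polynomial.coeff_add, hp, hq, MvPolynomial.coeff_add]

theorem bigrade_C_mul_X_mul_X_mul_sum_antidiagonal {R : Type*} [CommSemiring R] (r : R) (d : ℕ) :
    bigrade R (MvPolynomial.C r * MvPolynomial.X 0 * MvPolynomial.X 1 *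
        ∑ ab ∈ antidiagonal d, MvPolynomial.X 0 ^ ab.1 * MvPolynomial.X 1 ^ ab.2) =
      Polynomial.C (C r * X * ∑ i ∈ range (d + 1), X ^ i) * Polynomial.X ^ (d + 2) := by
  simp only [bigrade, map_mul, map_sum, map_pow, MvPolynomial.aeval_X, MvPolynomial.aeval_C,
    Matrix.cons_val_zero, Matrix.cons_val_one, Polynomial.algebraMap_apply, algebraMap_eq, mul_pow,
    Finset.Nat.sum_antidiagonal_eq_sum_range_succ_mk]
  have hterm : ∀ i ∈ range (d + 1),
      (Polynomial.C X : Polynomial R⟦X⟧) ^ i * Polynomial.X ^ i * Polynomial.X ^ (d - i) =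
        Polynomial.C X ^ i * Polynomial.X ^ d := fun i hi => by
    rw [mul_assoc, ← pow_add, Nat.add_sub_cancel' (Nat.lt_succ_iff.1 (mem_range.1 hi))]
  rw [sum_congr rfl hterm, ← sum_mul]
  ring

/-- The polynomial `u` with `Lseries M b = log (1 - u)`. -/
noncomputable def grunskyPoly {R : Type*} [CommSemiring R] (M : ℕ) (b : ℕ → R) :
    MvPolynomial (Fin 2) R :=
  ∑ j ∈ Icc 2 M, MvPolynomial.C (b j) * MvPolynomial.X 0 * MvPolynomial.X 1 *
    ∑ ab ∈ antidiagonal (j - 2), MvPolynomial.X 0 ^ ab.1 * MvPolynomial.X 1 ^ ab.2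

theorem coeff_Lseries (M : ℕ) (b : ℕ → ℂ) (d : Fin 2 →₀ ℕ) :
    MvPowerSeries.coeff d (Lseries M b) =
      -∑ l ∈ range (d 0 + d 1 + 1), (l : ℂ)⁻¹ * MvPolynomial.coeff d (grunskyPoly M b ^ l) := by
  simp only [← MvPolynomial.coeff_coe, grunskyPoly,
    ← MvPolynomial.coeToMvPowerSeries.ringHom_apply, map_sum, map_mul, map_pow]
  simp only [MvPolynomial.coeToMvPowerSeries.ringHom_apply, MvPolynomial.coe_C, MvPolynomial.coe_X]
  rfl

theorem bigrade_grunskyPoly {R : Type*} [CommSemiring R] (M : ℕ) (b : ℕ → R) :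
    bigrade R (grunskyPoly M b) =
      ∑ j ∈ Icc 2 M, Polynomial.C (C (b j) * X * ∑ i ∈ range (j - 1), X ^ i) * Polynomial.X ^ j := by
  rw [grunskyPoly, map_sum]
  refine sum_congr rfl fun j hj => ?_
  obtain ⟨d, rfl⟩ : ∃ d, j = d + 2 := ⟨j - 2, by grind⟩
  rw [bigrade_C_mul_X_mul_X_mul_sum_antidiagonal, Nat.add_sub_cancel]
  rfl

theorem PowerSeries.coeff_finsuppProd_C_mul_X_mul_pow {A : Type*} [CommSemiring A]
    (m : ℕ →₀ ℕ) (b : ℕ → A) (g : ℕ → A⟦X⟧) (k : ℕ) :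
    coeff k (m.prod fun j e => (C (b j) * X * g j) ^ e) =
      (m.prod fun j e => b j ^ e) *
        if (m.sum fun _ e => e) ≤ k then
          coeff (k - m.sum fun _ e => e) (m.prod fun j e => g j ^ e)
        else 0 := by
  have hfactor : (m.prod fun j e => (C (b j) * X * g j) ^ e) =
      C (m.prod fun j e => b j ^ e) * (X ^ (m.sum fun _ e => e) * m.prod fun j e => g j ^ e) := by
    simp only [Finsupp.prod, Finsupp.sum, mul_pow, prod_mul_distrib, map_prod, map_pow,
      prod_pow_eq_pow_sum, mul_assoc]
  rw [hfactor, coeff_C_mul, coeff_X_pow_mul']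

theorem Vcoeff_natCast_sub (m : ℕ →₀ ℕ) (k l : ℕ) :
    Vcoeff m (k - l) =
      if l ≤ k then coeff (k - l) (m.prod fun j e => (∑ i ∈ range (j - 1), X ^ i : ℂ⟦X⟧) ^ e)
      else 0 := by
  rw [Vcoeff]
  by_cases hlk : l ≤ k
  · rw [if_pos (by omega), if_pos hlk, show ((k : ℤ) - l).toNat = k - l by omega]
    rfl
  · rw [if_neg (by omega), if_neg hlk]

theorem Finsupp.inv_sum_mul_multinomial {ι K : Type*} [Field K] [CharZero K] (m : ι →₀ ℕ)
    (hm : (m.sum fun _ e => e) ≠ 0) :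
    ((m.sum fun _ e => e : ℕ) : K)⁻¹ * m.multinomial =
      (((m.sum fun _ e => e) - 1).factorial : K) / ∏ i ∈ m.support, ((m i).factorial : K) := by
  have hspec : m.multinomial * ∏ i ∈ m.support, (m i).factorial =
      (m.sum fun _ e => e) * ((m.sum fun _ e => e) - 1).factorial := by
    rw [mul_comm, Nat.mul_factorial_pred hm]
    exact Nat.multinomial_spec m.support m
  have hfact : ∏ i ∈ m.support, ((m i).factorial : K) ≠ 0 :=
    Finset.prod_ne_zero_iff.2 fun i _ => Nat.cast_ne_zero.2 (Nat.factorial_ne_zero _)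
  have hm' : ((m.sum fun _ e => e : ℕ) : K) ≠ 0 := Nat.cast_ne_zero.2 hm
  field_simp
  exact_mod_cast hspec

theorem coeff_grunskyPoly_pow {R : Type*} [CommSemiring R] (M : ℕ) (b : ℕ → R) (l k n : ℕ) :
    MvPolynomial.coeff (Finsupp.single 0 k + Finsupp.single 1 n) (grunskyPoly M b ^ l) =
      ∑ m ∈ finsuppAntidiag (Icc 2 M) l with (m.sum fun j e => j * e) = k + n,
        (m.multinomial : R) *
          coeff k (m.prod fun j e => (C (b j) * X * ∑ i ∈ range (j - 1), X ^ i) ^ e) := by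
  rw [← coeff_bigrade, map_pow, bigrade_grunskyPoly, Polynomial.coeff_sum_C_mul_X_pow_pow, map_sum]
  refine sum_congr rfl fun m _ => ?_
  rw [← map_natCast C, coeff_C_mul]

theorem sum_le_sum_mul_of_support_subset {S : Finset ℕ} (hS : 0 ∉ S) {m : ℕ →₀ ℕ}
    (hm : m.support ⊆ S) :
    S.sum m ≤ m.sum fun j e => j * e := by
  rw [Finsupp.sum_of_support_subset m hm _ (by simp)]
  refine sum_le_sum fun j hj => Nat.le_mul_of_pos_left _ (Nat.pos_of_ne_zero ?_)
  rintro rfl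
  exact hS hj

theorem sum_range_sum_finsuppAntidiag_eq_finsum {β : Type*} [AddCommMonoid β] {S : Finset ℕ}
    (hS : 0 ∉ S) (N : ℕ) (T : (ℕ →₀ ℕ) → β) :
    ∑ l ∈ range (N + 1), ∑ m ∈ finsuppAntidiag S l with (m.sum fun j e => j * e) = N, T m =
      ∑ᶠ (m : ℕ →₀ ℕ) (_ : (m.support : Set ℕ) ⊆ S ∧ (m.sum fun j e => j * e) = N), T m := by
  rw [← sum_biUnion]
  · refine (finsum_cond_eq_sum_of_cond_iff T fun {m} _ => ?_).symm
    simp only [mem_biUnion, mem_filter, mem_finsuppAntidiag, mem_range, coe_subset]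
    constructor
    · rintro ⟨hsupp, hwt⟩
      have := sum_le_sum_mul_of_support_subset hS hsupp
      exact ⟨S.sum m, by omega, ⟨rfl, hsupp⟩, hwt⟩
    · rintro ⟨_, _, ⟨_, hsupp⟩, hwt⟩
      exact ⟨hsupp, hwt⟩
  · intro l₁ _ l₂ _ hne
    refine disjoint_left.2 fun m hm₁ hm₂ => hne ?_
    rw [← (mem_finsuppAntidiag.1 (mem_filter.1 hm₁).1).1,
      (mem_finsuppAntidiag.1 (mem_filter.1 hm₂).1).1]

theorem coeff_L_grunsky_general (M : ℕ) (b : ℕ → ℂ) (n k : ℕ) (hk : 1 ≤ k) :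
    MvPowerSeries.coeff (Finsupp.single 0 k + Finsupp.single 1 n) (Lseries M b) =
      -∑ᶠ (m : ℕ →₀ ℕ)
          (_ : (m.support : Set ℕ) ⊆ Finset.Icc 2 M ∧ (m.sum fun j e => j * e) = n + k),
          ((((m.sum fun _ e => e) - 1).factorial : ℂ) /
              ∏ j ∈ m.support, ((m j).factorial : ℂ)) *
            (∏ j ∈ m.support, b j ^ m j) *
            Vcoeff m ((k : ℤ) - (m.sum fun _ e => e : ℕ)) := by
  rw [coeff_Lseries, ← sum_range_sum_finsuppAntidiag_eq_finsum (by simp)]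
  simp only [Finsupp.add_apply, Finsupp.single_eq_same, Finsupp.single_eq_of_ne zero_ne_one,
    Finsupp.single_eq_of_ne one_ne_zero, add_zero, zero_add]
  rw [add_comm k n]
  congr 1
  refine sum_congr rfl fun l _ => ?_
  rw [coeff_grunskyPoly_pow, add_comm k n, mul_sum]
  refine sum_congr rfl fun m hm => ?_
  obtain ⟨hml, hwt⟩ := mem_filter.1 hm
  obtain ⟨rfl, -⟩ := mem_finsuppAntidiag'.1 hml
  have hm0 : (m.sum fun _ e => e) ≠ 0 := fun h => by
    rw [(Finsupp.degree_eq_zero_iff m).1 h, Finsupp.sum_zero_index] at hwt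
    omega
  rw [PowerSeries.coeff_finsuppProd_C_mul_X_mul_pow, Vcoeff_natCast_sub, ← mul_assoc,
    Finsupp.inv_sum_mul_multinomial m hm0, Finsupp.prod]
  ring

/-- For `b₂,…,b_M ∈ ℂ` and all `n, k ≥ 1`, the coefficient of `x^k yⁿ` in
`L(x,y) = log(1 − ∑_{j=2}^M bⱼ·xy·h_{j−2}(x,y))` equals
`−∑_m ((|m|−1)!/∏_{j≥2} mⱼ!) b^m V_{k−|m|}(m)`, the sum over finitely supported
sequences `m = (m₂, m₃, …)` supported in `{2,…,M}` with `∑ j·mⱼ = n + k`; here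
`V_p(m)` is the coefficient of `t^p` in `∏_{j≥3} (1 + t + ⋯ + t^{j−2})^{mⱼ}`.
(This gives the Grunsky coefficients: `βₙₖ = −n·[x^k yⁿ]L`.) -/
theorem coeff_L_grunsky (M : ℕ) (b : ℕ → ℂ) (n k : ℕ) (hn : 1 ≤ n) (hk : 1 ≤ k) :
    MvPowerSeries.coeff (Finsupp.single 0 k + Finsupp.single 1 n) (Lseries M b) =
      -∑ᶠ (m : ℕ →₀ ℕ)
          (_ : (m.support : Set ℕ) ⊆ Finset.Icc 2 M ∧ (m.sum fun j e => j * e) = n + k),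
          ((((m.sum fun _ e => e) - 1).factorial : ℂ) /
              ∏ j ∈ m.support, ((m j).factorial : ℂ)) *
            (∏ j ∈ m.support, b j ^ m j) *
            Vcoeff m ((k : ℤ) - (m.sum fun _ e => e : ℕ)) :=
  coeff_L_grunsky_general M b n k hk
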